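/- Suppose n ≥ 2m and 1 ≤ t ≤ m-1. Then χ(J_q(n,m,t)) ≤ χ(J(n,m,t)) · q^{(n-m)(m-t)}, where J(n,m,t) is the corresponding power of the Johnson graph. -/

import Mathlib

/-!
Colour a subspace `U` by the pair formed by the colour of its pivot set in a proper colouring of
`J(n, m, t)` and the coset of its reduced row echelon matrix `A_U` modulo a maximum rank distance
code `C` of minimum rank distance `m - t + 1`. Since `pivots (U ⊓ W) ⊆ pivots U ∩ pivots W`,
adjacent subspaces with different pivot sets have adjacent pivot sets. Adjacent subspaces with the
same pivot set have `A_U ≠ A_W`, and `U ⊓ W` embeds into `ker (A_U - A_W)`, which has dimension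
`< t` when `A_U - A_W` is a nonzero codeword. A Gabidulin code, made of `q`-linearized polynomials
of `q`-degree `< t` over `𝔽_{q^(n-m)}`, has `q ^ ((n - m) * (m - t))` cosets.
-/

open Module

/-- The power of the Johnson graph. -/
def johnsonPower (n m t : ℕ) : SimpleGraph {S : Finset (Fin n) // S.card = m} where
  Adj S T := S ≠ T ∧ t ≤ ((S : Finset (Fin n)) ∩ (T : Finset (Fin n))).card
  symm := by
    constructor
    intro S T h
    exact ⟨h.1.symm, by simpa [Finset.inter_comm] using h.2⟩
  loopless := ⟨fun S h => h.1 rfl⟩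

/-- The power of the Grassmann graph. -/
def grassmannPower (F : Type) [Field F] (n m t : ℕ) :
    SimpleGraph {U : Submodule F (Fin n → F) // finrank F U = m} where
  Adj U W := U ≠ W ∧ t ≤ finrank F ((U : Submodule F (Fin n → F)) ⊓ (W : Submodule F (Fin n → F)) :
    Submodule F (Fin n → F))
  symm := by
    constructor
    intro U W h
    exact ⟨h.1.symm, by rw [inf_comm]; exact h.2⟩
  loopless := ⟨fun U h => h.1 rfl⟩

open Finset

theorem linearIndependent_of_isUpperTriangular {R ι κ : Type*} [CommRing R] [IsDomain R]
    [Fintype ι] [LinearOrder ι] (w : ι → κ → R) (p : ι → κ) (hdiag : ∀ i, w i (p i) ≠ 0)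
    (htri : ∀ i j, j < i → w i (p j) = 0) : LinearIndependent R w := by
  classical
  let M : Matrix ι ι R := .of fun i j => w i (p j)
  have hdet : M.det ≠ 0 := by
    rw [Matrix.det_of_isUpperTriangular (M := M) fun i j hji => htri i j hji]
    exact prod_ne_zero_iff.2 fun i _ => hdiag i
  exact .of_comp (LinearMap.funLeft R R p) (Matrix.linearIndependent_rows_of_det_ne_zero hdet)

theorem LinearMap.graph_inf_graph {R X Y : Type*} [Ring R] [AddCommGroup X] [Module R X]
    [AddCommGroup Y] [Module R Y] (f g : X →ₗ[R] Y) :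
    f.graph ⊓ g.graph = (LinearMap.ker (f - g)).map (LinearMap.id.prod f) := by
  ext ⟨x, y⟩
  simp only [Submodule.mem_inf, LinearMap.mem_graph_iff, Submodule.mem_map, LinearMap.mem_ker,
    LinearMap.sub_apply, sub_eq_zero, LinearMap.prod_apply, Function.prod, LinearMap.id_apply,
    Prod.mk.injEq]
  constructor
  · rintro ⟨rfl, h⟩
    exact ⟨x, h, rfl, rfl⟩
  · rintro ⟨x, h, rfl, rfl⟩
    exact ⟨rfl, h⟩

theorem Submodule.exists_eq_graph_of_finrank_eq {K X Y : Type*} [Field K] [AddCommGroup X]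
    [Module K X] [AddCommGroup Y] [Module K Y] [FiniteDimensional K X] {G : Submodule K (X × Y)}
    [FiniteDimensional K G] (hG : ∀ x ∈ G, x.1 = 0 → x = 0) (hdim : finrank K G = finrank K X) :
    ∃ f : X →ₗ[K] Y, G = f.graph := by
  have hinj : Function.Injective (LinearMap.fst K X Y ∘ₗ G.subtype) :=
    (injective_iff_map_eq_zero _).2 fun x hx => Subtype.ext (hG x x.2 hx)
  exact Submodule.exists_eq_graph
    ⟨hinj, (LinearMap.injective_iff_surjective_of_finrank_eq_finrank hdim).1 hinj⟩

theorem Submodule.finrank_comap_le_of_injective {K V W : Type*} [Field K] [AddCommGroup V]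
    [Module K V] [AddCommGroup W] [Module K W] [FiniteDimensional K W] {f : V →ₗ[K] W}
    (hf : Function.Injective f) (p : Submodule K W) : finrank K (p.comap f) ≤ finrank K p :=
  LinearMap.finrank_le_finrank_of_injective (f := f.restrict fun _ h => h)
    fun _ _ h => Subtype.ext (hf (congrArg Subtype.val h))

theorem SimpleGraph.chromaticNumber_le_mul_natCard {V W β : Type*} {G : SimpleGraph V}
    {H : SimpleGraph W} [Finite W] [Finite β] (φ : V → W) (κ : V → β)
    (h : ∀ u v, G.Adj u v → κ u = κ v → H.Adj (φ u) (φ v)) :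
    G.chromaticNumber ≤ H.chromaticNumber * Nat.card β := by
  have := Fintype.ofFinite β
  obtain ⟨c⟩ := H.colorable_chromaticNumber_of_fintype
  let C : G.Coloring (Fin H.chromaticNumber.toNat × β) :=
    Coloring.mk (fun v => (c (φ v), κ v)) fun huv hc =>
      c.valid (h _ _ huv (congrArg Prod.snd hc)) (congrArg Prod.fst hc)
  calc G.chromaticNumber ≤ Fintype.card (Fin H.chromaticNumber.toNat × β) :=
        C.colorable.chromaticNumber_le
    _ = H.chromaticNumber * Nat.card β := by
        rw [Fintype.card_prod, Fintype.card_fin, Nat.card_eq_fintype_card, Nat.cast_mul,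
          ENat.natCast_toNat
            (chromaticNumber_ne_top_iff_exists.2 ⟨_, H.colorable_chromaticNumber_of_fintype⟩)]

section Pivots

variable {F : Type*} [Field F] {n : ℕ}

open Classical in
/-- The pivot positions of the reduced row echelon form of `U`. -/
noncomputable def pivots (U : Submodule F (Fin n → F)) : Finset (Fin n) :=
  {i | ∃ v ∈ U, v i ≠ 0 ∧ ∀ j < i, v j = 0}

variable {U W : Submodule F (Fin n → F)}

theorem mem_pivots {i : Fin n} : i ∈ pivots U ↔ ∃ v ∈ U, v i ≠ 0 ∧ ∀ j < i, v j = 0 := by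
  classical simp [pivots]

theorem exists_mem_pivots_ne_zero {v : Fin n → F} (hv : v ∈ U) (hv0 : v ≠ 0) :
    ∃ i ∈ pivots U, v i ≠ 0 := by
  obtain ⟨j, hj⟩ := Function.ne_iff.1 hv0
  obtain ⟨i, hi, hmin⟩ := wellFounded_lt.has_min {j | v j ≠ 0} ⟨j, hj⟩
  exact ⟨i, mem_pivots.2 ⟨v, hv, hi, fun k hk => not_not.1 fun h => hmin k h hk⟩, hi⟩

theorem eq_zero_of_forall_mem_pivots {v : Fin n → F} (hv : v ∈ U)
    (h : ∀ i ∈ pivots U, v i = 0) : v = 0 := by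
  by_contra hv0
  obtain ⟨i, hi, hvi⟩ := exists_mem_pivots_ne_zero hv hv0
  exact hvi (h i hi)

theorem pivots_inf_subset : pivots (U ⊓ W) ⊆ pivots U ∩ pivots W := by
  intro i hi
  obtain ⟨v, hv, hvi, hlt⟩ := mem_pivots.1 hi
  exact mem_inter.2 ⟨mem_pivots.2 ⟨v, hv.1, hvi, hlt⟩, mem_pivots.2 ⟨v, hv.2, hvi, hlt⟩⟩

theorem card_pivots (U : Submodule F (Fin n → F)) : #(pivots U) = finrank F U := by
  apply le_antisymm
  · choose w hwU hw hw0 using fun i : pivots U => mem_pivots.1 i.2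
    have hli : LinearIndependent F fun i => (⟨w i, hwU i⟩ : U) :=
      .of_comp U.subtype <| linearIndependent_of_isUpperTriangular w (↑) hw
        fun i j => hw0 i j
    simpa using hli.fintype_card_le_finrank
  · let restrict : U →ₗ[F] (pivots U → F) := LinearMap.funLeft F F (↑) ∘ₗ U.subtype
    have hinj : Function.Injective restrict := by
      refine (injective_iff_map_eq_zero restrict).2 fun v hv => Subtype.ext ?_
      exact eq_zero_of_forall_mem_pivots v.2 fun i hi => congrFun hv ⟨i, hi⟩
    simpa using LinearMap.finrank_le_finrank_of_injective hinj

end Pivots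

section IdentifyingMatrix

variable (F : Type*) [Field F] {n m : ℕ}

/-- Coordinates on `F^n` separating the coordinates in `S` from the others. -/
noncomputable def pivotCoords (S : {S : Finset (Fin n) // #S = m}) :
    (Fin n → F) ≃ₗ[F] (Fin m → F) × (Fin (n - m) → F) :=
  (LinearEquiv.funCongrLeft F F
    (((S.1.equivFinOfCardEq S.2).sumCongr
      (Fintype.equivFinOfCardEq (by simp [Fintype.card_subtype_compl, S.2]))).symm.trans
        (Equiv.sumCompl (· ∈ S.1)))).trans
    (LinearEquiv.sumArrowLequivProdArrow _ _ F F)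

variable {F}

theorem pivotCoords_fst_eq_zero {S : {S : Finset (Fin n) // #S = m}} {v : Fin n → F}
    (h : (pivotCoords F S v).1 = 0) : ∀ i ∈ S.1, v i = 0 := by
  intro i hi
  simpa [pivotCoords] using congrFun h (S.1.equivFinOfCardEq S.2 ⟨i, hi⟩)

noncomputable def pivotSet (U : {U : Submodule F (Fin n → F) // finrank F U = m}) :
    {S : Finset (Fin n) // #S = m} :=
  ⟨pivots U.1, (card_pivots U.1).trans U.2⟩

theorem exists_map_pivotCoords_eq_graph (U : {U : Submodule F (Fin n → F) // finrank F U = m}) :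
    ∃ A : (Fin m → F) →ₗ[F] (Fin (n - m) → F),
      U.1.map (pivotCoords F (pivotSet U)).toLinearMap = A.graph := by
  refine Submodule.exists_eq_graph_of_finrank_eq ?_ ?_
  · rintro _ ⟨v, hv, rfl⟩ h0
    rw [eq_zero_of_forall_mem_pivots hv (pivotCoords_fst_eq_zero h0), map_zero]
  · rw [LinearEquiv.finrank_map_eq, U.2, finrank_fin_fun]

/-- The matrix `A` of the reduced row echelon form `[I | A]` of `U`, after moving the pivot
columns to the front. -/
noncomputable def identifyingMatrix (U : {U : Submodule F (Fin n → F) // finrank F U = m}) :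
    (Fin m → F) →ₗ[F] (Fin (n - m) → F) :=
  (exists_map_pivotCoords_eq_graph U).choose

theorem map_pivotCoords_eq_graph (U : {U : Submodule F (Fin n → F) // finrank F U = m}) :
    U.1.map (pivotCoords F (pivotSet U)).toLinearMap = (identifyingMatrix U).graph :=
  (exists_map_pivotCoords_eq_graph U).choose_spec

variable {U W : {U : Submodule F (Fin n → F) // finrank F U = m}}

theorem eq_of_identifyingMatrix_eq (hS : pivotSet U = pivotSet W)
    (hA : identifyingMatrix U = identifyingMatrix W) : U = W := by
  have h := map_pivotCoords_eq_graph W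
  rw [← hS, ← hA, ← map_pivotCoords_eq_graph U] at h
  exact Subtype.ext (Submodule.map_injective_of_injective (pivotCoords F _).injective h.symm)

theorem finrank_inf_le_finrank_ker_sub (hS : pivotSet U = pivotSet W) :
    finrank F ↥(U.1 ⊓ W.1) ≤
      finrank F (LinearMap.ker (identifyingMatrix U - identifyingMatrix W)) := by
  have hW := map_pivotCoords_eq_graph W
  rw [← hS] at hW
  calc finrank F ↥(U.1 ⊓ W.1)
      = finrank F ↥((U.1 ⊓ W.1).map (pivotCoords F (pivotSet U)).toLinearMap) :=
        (LinearEquiv.finrank_map_eq _ _).symm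
    _ = finrank F ↥((identifyingMatrix U).graph ⊓ (identifyingMatrix W).graph) := by
        rw [Submodule.map_inf _ (pivotCoords F _).injective, map_pivotCoords_eq_graph, hW]
    _ ≤ _ := by
        rw [LinearMap.graph_inf_graph]
        exact Submodule.finrank_map_le _ _

end IdentifyingMatrix

section LinearizedPoly

open Polynomial

variable (F : Type*) [Field F] [Fintype F] {L : Type*} [Field L] [Algebra F L] {t : ℕ}

noncomputable def linearizedPoly : (Fin t → L) →ₗ[F] L →ₗ[F] L where
  toFun c := ∑ j, c j • (FiniteField.frobeniusAlgHom F L ^ (j : ℕ)).toLinearMap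
  map_add' c c' := by simp [add_smul, Finset.sum_add_distrib]
  map_smul' a c := by simp [Finset.smul_sum, smul_assoc]

theorem linearizedPoly_apply (c : Fin t → L) (x : L) :
    linearizedPoly F c x = ∑ j, c j * x ^ Fintype.card F ^ (j : ℕ) := by
  simp [linearizedPoly, AlgHom.coe_pow, FiniteField.coe_frobeniusAlgHom, pow_iterate]

theorem finrank_ker_linearizedPoly_lt [Finite L] {c : Fin t → L} (hc : c ≠ 0) :
    finrank F (LinearMap.ker (linearizedPoly F c)) < t := by
  classical
  have := Fintype.ofFinite L
  set q := Fintype.card F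
  have hq : 1 < q := Fintype.one_lt_card
  obtain ⟨j₀, hj₀⟩ := Function.ne_iff.1 hc
  let P : L[X] := ∑ j : Fin t, monomial (q ^ (j : ℕ)) (c j)
  have hP : P ≠ 0 := fun h => hj₀ <| by
    simpa [P, finsetSum_coeff, coeff_monomial, (Nat.pow_right_injective hq).eq_iff, Fin.val_inj]
      using congr_arg (coeff · (q ^ (j₀ : ℕ))) h
  have hdeg : P.natDegree < q ^ t := by
    have := j₀.2
    refine (natDegree_sum_le_of_forall_le _ _ fun j _ => (natDegree_monomial_le _).trans
      (Nat.pow_le_pow_right hq.le (Nat.le_sub_one_of_lt j.2))).trans_lt ?_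
    exact Nat.pow_lt_pow_right hq (by omega)
  let Z : Finset L := {x | linearizedPoly F c x = 0}
  have hZ : Z.val ⊆ P.roots := fun x hx => by
    simpa [Z, P, hP, eval_finsetSum, linearizedPoly_apply] using hx
  have hcard : q ^ finrank F (LinearMap.ker (linearizedPoly F c)) = Z.card := by
    rw [show q = Nat.card F from Nat.card_eq_fintype_card.symm, ← Module.natCard_eq_pow_finrank]
    simp [Z, Nat.card_eq_fintype_card, Fintype.card_subtype]
  exact (Nat.pow_lt_pow_iff_right hq).1
    (hcard ▸ (card_le_degree_of_subset_roots hZ).trans_lt hdeg)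

end LinearizedPoly

/-- Maximum rank distance codes (Gabidulin): `finrank (ker D) < t` says that `D` has rank at least
`m - t + 1`. -/
theorem exists_mrdCode (F : Type*) [Field F] [Fintype F] {m s t : ℕ} (htm : t ≤ m) (hms : m ≤ s) :
    ∃ C : Submodule F ((Fin m → F) →ₗ[F] (Fin s → F)), finrank F C = t * s ∧
      ∀ D ∈ C, D ≠ 0 → finrank F (LinearMap.ker D) < t := by
  obtain rfl | hs := eq_or_ne s 0
  · exact ⟨⊥, by simp, fun D hD hD0 => absurd ((Submodule.mem_bot F).1 hD) hD0⟩
  obtain ⟨p, _⟩ := CharP.exists F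
  have : Fact p.Prime := ⟨CharP.char_is_prime F p⟩
  have : NeZero s := ⟨hs⟩
  let L := FiniteField.Extension F p s
  have hL : finrank F L = s := FiniteField.finrank_extension F p s
  let b : Basis (Fin s) F L := Module.finBasisOfFinrankEq F L hL
  let g : (Fin m → F) →ₗ[F] L := Fintype.linearCombination F (b ∘ Fin.castLE hms)
  have hg : Function.Injective g :=
    (b.linearIndependent.comp _ (Fin.castLE_injective hms)).fintypeLinearCombination_injective
  let Φ : (Fin t → L) →ₗ[F] (Fin m → F) →ₗ[F] (Fin s → F) :=
    LinearMap.llcomp F _ _ _ b.equivFun.toLinearMap ∘ₗ LinearMap.lcomp F L g ∘ₗ linearizedPoly F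
  have hker : ∀ c, c ≠ 0 → finrank F (LinearMap.ker (Φ c)) < t := fun c hc => calc
    finrank F (LinearMap.ker (Φ c))
        = finrank F ((LinearMap.ker (linearizedPoly F c)).comap g) := by
      rw [← LinearMap.ker_comp, ← LinearEquiv.ker_comp b.equivFun]
      rfl
    _ ≤ finrank F (LinearMap.ker (linearizedPoly F c)) :=
      Submodule.finrank_comap_le_of_injective hg _
    _ < t := finrank_ker_linearizedPoly_lt F hc
  have hΦ : Function.Injective Φ := by
    refine (injective_iff_map_eq_zero Φ).2 fun c hc => by_contra fun hc0 => ?_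
    have := hker c hc0
    rw [hc, LinearMap.ker_zero, finrank_top, finrank_fin_fun] at this
    omega
  refine ⟨LinearMap.range Φ, ?_, ?_⟩
  · rw [LinearMap.finrank_range_of_inj hΦ]
    simp [Module.finrank_pi_fintype, hL]
  · rintro _ ⟨c, rfl⟩ hD
    exact hker c fun hc => hD (by rw [hc, map_zero])

theorem johnsonPower_adj_pivotSet {F : Type} [Field F] {n m t : ℕ}
    {C : Submodule F ((Fin m → F) →ₗ[F] (Fin (n - m) → F))}
    (hC : ∀ D ∈ C, D ≠ 0 → finrank F (LinearMap.ker D) < t)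
    {U W : {U : Submodule F (Fin n → F) // finrank F U = m}}
    (hUW : (grassmannPower F n m t).Adj U W) (hA : identifyingMatrix U - identifyingMatrix W ∈ C) :
    (johnsonPower n m t).Adj (pivotSet U) (pivotSet W) := by
  obtain ⟨hne, ht⟩ := hUW
  refine ⟨fun hS => ?_, ?_⟩
  · have hA0 : identifyingMatrix U - identifyingMatrix W ≠ 0 := fun h =>
      hne (eq_of_identifyingMatrix_eq hS (sub_eq_zero.1 h))
    exact (ht.trans (finrank_inf_le_finrank_ker_sub hS)).not_gt (hC _ hA hA0)
  · calc t ≤ finrank F ↥(U.1 ⊓ W.1) := ht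
      _ = #(pivots (U.1 ⊓ W.1)) := (card_pivots _).symm
      _ ≤ #(pivots U.1 ∩ pivots W.1) := card_le_card pivots_inf_subset

theorem chromaticNumber_grassmannPower_le_general (F : Type) [Field F] [Fintype F] (n m t : ℕ)
    (hn : 2 * m ≤ n) (htm : t ≤ m - 1) :
    (grassmannPower F n m t).chromaticNumber ≤
      (johnsonPower n m t).chromaticNumber *
        ((Fintype.card F ^ ((n - m) * (m - t)) : ℕ) : ℕ∞) := by
  obtain ⟨C, hCdim, hC⟩ := exists_mrdCode F (m := m) (s := n - m) (t := t) (by omega) (by omega)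
  have : Finite (((Fin m → F) →ₗ[F] (Fin (n - m) → F)) ⧸ C) := Module.finite_of_finite F
  have hcard : Nat.card (((Fin m → F) →ₗ[F] (Fin (n - m) → F)) ⧸ C) =
      Fintype.card F ^ ((n - m) * (m - t)) := by
    have hdim := C.finrank_quotient_add_finrank
    rw [Module.finrank_linearMap, finrank_fin_fun, finrank_fin_fun, hCdim] at hdim
    rw [Module.natCard_eq_pow_finrank (K := F), Nat.card_eq_fintype_card,
      Nat.eq_sub_of_add_eq hdim, ← Nat.sub_mul, mul_comm]
  calc (grassmannPower F n m t).chromaticNumber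
      ≤ (johnsonPower n m t).chromaticNumber * Nat.card (_ ⧸ C) :=
        SimpleGraph.chromaticNumber_le_mul_natCard pivotSet
          (fun U => Submodule.Quotient.mk (identifyingMatrix U)) fun _ _ hUW hκ =>
            johnsonPower_adj_pivotSet hC hUW ((Submodule.Quotient.eq C).1 hκ)
    _ = _ := by rw [hcard]

/-- For `n ≥ 2m` and `1 ≤ t ≤ m-1`:
`χ(J_q(n,m,t)) ≤ χ(J(n,m,t)) · q^{(n-m)(m-t)}`. -/
theorem chromaticNumber_grassmannPower_le (F : Type) [Field F] [Fintype F] (n m t : ℕ)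
    (hn : 2 * m ≤ n) (ht : 1 ≤ t) (htm : t ≤ m - 1) :
    (grassmannPower F n m t).chromaticNumber ≤
      (johnsonPower n m t).chromaticNumber *
        ((Fintype.card F ^ ((n - m) * (m - t)) : ℕ) : ℕ∞) :=
  chromaticNumber_grassmannPower_le_general F n m t hn htm
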